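/- (Multiple-fixed-point counterexample: API has two fixed points.) Define T : [0,1] → ℝ by T(ρ) = 1 if 3ρ − 1 > −ρ and T(ρ) = 0 otherwise. Then T(ρ) = 1 if and only if ρ > 1/4; in particular T(0) = 0 and T(1) = 1, so both deterministic policies are fixed points of T; moreover T(T(ρ)) = T(ρ) for every ρ ∈ [0,1], so approximate policy iteration converges after one round to the fixed point 0 if ρ ≤ 1/4 and to the fixed point 1 if ρ > 1/4. -/

import Mathlib

/-- One round of approximate policy iteration on the multiple-fixed-point
counterexample: the evaluation step produces θ* = (2ρ, −ρ, 3ρ−1) and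
greedification compares the look-ahead value 3ρ−1 of the right action against
−ρ for the left action (ties broken left); output 1 = right, 0 = left. -/
noncomputable def multiAPI (ρ : ℝ) : ℝ := if 3 * ρ - 1 > -ρ then 1 else 0

/-! The greedy switch happens where the look-ahead values 3ρ − 1 and −ρ cross, at ρ = 1/4;
since T only takes the values 0 and 1, which lie on either side of 1/4, T ∘ T = T. -/

theorem multiAPI_eq_ite (ρ : ℝ) : multiAPI ρ = if 1 / 4 < ρ then 1 else 0 := by
  have hswitch : 3 * ρ - 1 > -ρ ↔ 1 / 4 < ρ := by constructor <;> intro h <;> linarith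
  simp only [multiAPI, hswitch]

theorem multiAPI_of_gt {ρ : ℝ} (h : 1 / 4 < ρ) : multiAPI ρ = 1 := by
  rw [multiAPI_eq_ite, if_pos h]

theorem multiAPI_of_le {ρ : ℝ} (h : ρ ≤ 1 / 4) : multiAPI ρ = 0 := by
  rw [multiAPI_eq_ite, if_neg (not_lt.mpr h)]

theorem multiAPI_eq_one_iff (ρ : ℝ) : multiAPI ρ = 1 ↔ 1 / 4 < ρ := by
  refine ⟨fun h => ?_, multiAPI_of_gt⟩
  by_contra hle
  rw [multiAPI_of_le (not_lt.mp hle)] at h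
  exact zero_ne_one h

theorem multiAPI_zero : multiAPI 0 = 0 := multiAPI_of_le (by norm_num)

theorem multiAPI_one : multiAPI 1 = 1 := multiAPI_of_gt (by norm_num)

theorem multiAPI_multiAPI (ρ : ℝ) : multiAPI (multiAPI ρ) = multiAPI ρ := by
  rcases le_or_gt ρ (1 / 4) with hle | hgt
  · rw [multiAPI_of_le hle, multiAPI_zero]
  · rw [multiAPI_of_gt hgt, multiAPI_one]

theorem multi_two_fixed_points :
    (∀ ρ ∈ Set.Icc (0:ℝ) 1, (multiAPI ρ = 1 ↔ ρ > 1/4)) ∧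
    multiAPI 0 = 0 ∧ multiAPI 1 = 1 ∧
    (∀ ρ ∈ Set.Icc (0:ℝ) 1, multiAPI (multiAPI ρ) = multiAPI ρ) ∧
    (∀ ρ ∈ Set.Icc (0:ℝ) 1, (ρ ≤ 1/4 → multiAPI ρ = 0) ∧ (ρ > 1/4 → multiAPI ρ = 1)) :=
  ⟨fun ρ _ => multiAPI_eq_one_iff ρ, multiAPI_zero, multiAPI_one,
    fun ρ _ => multiAPI_multiAPI ρ, fun _ _ => ⟨multiAPI_of_le, multiAPI_of_gt⟩⟩
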